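/- Pointwise bound on H: for any constants 0 < c₁ ≤ c₂ there exists C > 0 (depending only on c₁ and c₂) such that for all τ ∈ (0,1], x, k ∈ ℝ and σ ∈ [c₁, c₂], |H(τ,x,k,σ)| ≤ C τ^{−1} (1 + e^{k − x}). -/

import Mathlib

open Real MeasureTheory Set Filter

/-- Standard normal CDF `N(z) = (2π)^{-1/2} ∫_{-∞}^z e^{-t²/2} dt`. -/
noncomputable def Ncdf (z : ℝ) : ℝ :=
  (Real.sqrt (2 * Real.pi))⁻¹ * ∫ t in Set.Iic z, Real.exp (-t ^ 2 / 2)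

/-- Standard normal density `φ(z) = (2π)^{-1/2} e^{-z²/2}`. -/
noncomputable def phi (z : ℝ) : ℝ :=
  (Real.sqrt (2 * Real.pi))⁻¹ * Real.exp (-z ^ 2 / 2)

/-- `d₂ = (x-k)/(σ√τ) - σ√τ/2`. -/
noncomputable def d2 (τ x k σ : ℝ) : ℝ :=
  (x - k) / (σ * Real.sqrt τ) - σ * Real.sqrt τ / 2

/-- `d₁ = d₂ - σ√τ`. -/
noncomputable def d1 (τ x k σ : ℝ) : ℝ :=
  d2 τ x k σ - σ * Real.sqrt τ

/-- Black–Scholes price of an Inverse European call: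
`BS(τ,x,k,σ) = N(d₂) - e^{σ²τ + k - x} N(d₁)`. -/
noncomputable def BS (τ x k σ : ℝ) : ℝ :=
  Ncdf (d2 τ x k σ) - Real.exp (σ ^ 2 * τ + k - x) * Ncdf (d1 τ x k σ)

/-- Complementary error function `Erfc(z) = (2/√π) ∫_z^∞ e^{-t²} dt`. -/
noncomputable def Erfc (z : ℝ) : ℝ :=
  2 / Real.sqrt Real.pi * ∫ t in Set.Ioi z, Real.exp (-t ^ 2)

/-- `H(τ,x,k,σ) = ½ (∂³ₓₓₓ BS - ∂²ₓₓ BS)(τ,x,k,σ)`. -/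
noncomputable def Hfun (τ x k σ : ℝ) : ℝ :=
  (1 / 2) * (iteratedDeriv 3 (fun x' => BS τ x' k σ) x
    - iteratedDeriv 2 (fun x' => BS τ x' k σ) x)

/-- `G(τ,x,k,σ) = ∂ₖ H(τ,x,k,σ) - H(τ,x,k,σ)`. -/
noncomputable def Gfun (τ x k σ : ℝ) : ℝ :=
  deriv (fun k' => Hfun τ x k' σ) k - Hfun τ x k σ

lemma gauss_integrable : Integrable (fun t : ℝ => Real.exp (-t ^ 2 / 2)) := by
  have h := integrable_exp_neg_mul_sq (show (0:ℝ) < 1/2 by norm_num)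
  have he : (fun t : ℝ => Real.exp (-t ^ 2 / 2)) = fun t : ℝ => Real.exp (-(1/2) * t ^ 2) := by
    funext t; ring_nf
  rw [he]; exact h

lemma Ncdf_hasDerivAt (z : ℝ) : HasDerivAt Ncdf (phi z) z := by
  have hint := gauss_integrable
  have heq : Ncdf = fun w => (Real.sqrt (2*Real.pi))⁻¹ * (∫ t in Set.Iic (0:ℝ), Real.exp (-t^2/2))
      + (Real.sqrt (2*Real.pi))⁻¹ * ∫ t in (0:ℝ)..w, Real.exp (-t^2/2) := by
    funext w
    rw [← intervalIntegral.integral_Iic_sub_Iic hint.integrableOn hint.integrableOn]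
    unfold Ncdf; ring
  have hd : HasDerivAt (fun w => ∫ t in (0:ℝ)..w, Real.exp (-t^2/2)) (Real.exp (-z^2/2)) z := by
    refine intervalIntegral.integral_hasDerivAt_right (hint.intervalIntegrable) ?_ ?_
    · exact ((Continuous.stronglyMeasurable (by fun_prop : Continuous fun t : ℝ => Real.exp (-t^2/2))).stronglyMeasurableAtFilter)
    · fun_prop
  have := (hd.const_mul ((Real.sqrt (2*Real.pi))⁻¹)).const_add
    ((Real.sqrt (2*Real.pi))⁻¹ * (∫ t in Set.Iic (0:ℝ), Real.exp (-t^2/2)))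
  rw [heq]
  exact this

lemma sqrt_two_pi_ge_one : (1:ℝ) ≤ Real.sqrt (2 * Real.pi) := by
  rw [show (1:ℝ) = Real.sqrt 1 by simp]
  exact Real.sqrt_le_sqrt (by nlinarith [Real.pi_gt_three])

lemma inv_sqrt_two_pi_le_one : (Real.sqrt (2 * Real.pi))⁻¹ ≤ 1 := by
  rw [inv_le_one_iff₀]; right; exact sqrt_two_pi_ge_one

lemma Ncdf_nonneg (z : ℝ) : 0 ≤ Ncdf z :=
  mul_nonneg (inv_nonneg.2 (Real.sqrt_nonneg _))
    (setIntegral_nonneg measurableSet_Iic fun t _ => (Real.exp_pos _).le)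

lemma Ncdf_le_one (z : ℝ) : Ncdf z ≤ 1 := by
  have h1 : (∫ t in Set.Iic z, Real.exp (-t^2/2)) ≤ ∫ t : ℝ, Real.exp (-t^2/2) :=
    setIntegral_le_integral gauss_integrable (Filter.Eventually.of_forall fun t => (Real.exp_pos _).le)
  have h2 : (∫ t : ℝ, Real.exp (-t^2/2)) = Real.sqrt (2*Real.pi) := by
    have hg := integral_gaussian (1/2)
    have he : (fun t : ℝ => Real.exp (-t ^ 2 / 2)) = fun t : ℝ => Real.exp (-(1/2) * t ^ 2) := by
      funext t; ring_nf
    rw [he, hg]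
    rw [show Real.pi/(1/2) = 2*Real.pi by ring]
  have hs : (0:ℝ) < Real.sqrt (2*Real.pi) := lt_of_lt_of_le one_pos sqrt_two_pi_ge_one
  unfold Ncdf
  calc (Real.sqrt (2*Real.pi))⁻¹ * ∫ t in Set.Iic z, Real.exp (-t^2/2)
      ≤ (Real.sqrt (2*Real.pi))⁻¹ * Real.sqrt (2*Real.pi) := by
        apply mul_le_mul_of_nonneg_left (h2 ▸ h1) (inv_nonneg.2 hs.le)
    _ = 1 := inv_mul_cancel₀ hs.ne'

lemma phi_nonneg (z : ℝ) : 0 ≤ phi z :=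
  mul_nonneg (inv_nonneg.2 (Real.sqrt_nonneg _)) (Real.exp_pos _).le

lemma phi_le_one (z : ℝ) : phi z ≤ 1 := by
  unfold phi
  calc (Real.sqrt (2*Real.pi))⁻¹ * Real.exp (-z^2/2) ≤ 1 * 1 := by
        apply mul_le_mul inv_sqrt_two_pi_le_one (Real.exp_le_one_iff.2 (by nlinarith [sq_nonneg z])) (Real.exp_pos _).le one_pos.le
    _ = 1 := by norm_num

lemma abs_mul_phi_le_one (z : ℝ) : |z| * phi z ≤ 1 := by
  have h1 : |z| ≤ Real.exp (z^2/2) := by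
    have := Real.add_one_le_exp (z^2/2)
    have h2 : |z| ≤ z^2/2 + 1 := by nlinarith [sq_abs z, sq_nonneg (|z| - 1)]
    linarith
  have h3 : |z| * Real.exp (-z^2/2) ≤ 1 := by
    have := mul_le_mul_of_nonneg_right h1 (Real.exp_pos (-z^2/2)).le
    rwa [← Real.exp_add, show z^2/2 + -z^2/2 = 0 by ring, Real.exp_zero] at this
  unfold phi
  calc |z| * ((Real.sqrt (2*Real.pi))⁻¹ * Real.exp (-z^2/2))
      ≤ |z| * (1 * Real.exp (-z^2/2)) := by
        apply mul_le_mul_of_nonneg_left (mul_le_mul_of_nonneg_right inv_sqrt_two_pi_le_one (Real.exp_pos _).le) (abs_nonneg z)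
    _ = |z| * Real.exp (-z^2/2) := by ring
    _ ≤ 1 := h3

lemma phi_hasDerivAt (z : ℝ) : HasDerivAt phi (-z * phi z) z := by
  have h : HasDerivAt (fun w : ℝ => -w^2/2) (-z) z := by
    have := ((hasDerivAt_pow 2 z).neg.div_const 2)
    refine this.congr_deriv (Eq.symm ?_)
    simp; ring
  have h2 := (h.exp).const_mul ((Real.sqrt (2*Real.pi))⁻¹)
  have heq : phi = fun w => (Real.sqrt (2*Real.pi))⁻¹ * Real.exp (-w^2/2) := rfl
  rw [heq]
  refine h2.congr_deriv (Eq.symm ?_)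
  simp; ring

lemma key_eq {τ σ : ℝ} (hτ : 0 < τ) (hσ : 0 < σ) (x k : ℝ) :
    Real.exp (σ^2*τ + k - x) * phi (d1 τ x k σ) = phi (d2 τ x k σ) := by
  have hst : (0:ℝ) < σ * Real.sqrt τ := mul_pos hσ (Real.sqrt_pos.2 hτ)
  have hs2 : (σ * Real.sqrt τ)^2 = σ^2 * τ := by
    rw [mul_pow, Real.sq_sqrt hτ.le]
  unfold phi d1 d2
  set s := σ * Real.sqrt τ with hs
  rw [← mul_assoc, mul_comm (Real.exp (σ^2*τ + k - x)), mul_assoc, ← Real.exp_add]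
  congr 1
  rw [← hs2]
  field_simp
  ring

lemma hd2' (τ k σ : ℝ) (x : ℝ) :
    HasDerivAt (fun x' => d2 τ x' k σ) ((σ * Real.sqrt τ)⁻¹) x := by
  have : HasDerivAt (fun x' : ℝ => (x' - k) / (σ * Real.sqrt τ) - σ * Real.sqrt τ / 2)
      (1 / (σ * Real.sqrt τ)) x :=
    (((hasDerivAt_id x).sub_const k).div_const _).sub_const _
  simpa [one_div, d2] using this

lemma hd1' (τ k σ : ℝ) (x : ℝ) :
    HasDerivAt (fun x' => d1 τ x' k σ) ((σ * Real.sqrt τ)⁻¹) x :=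
  (hd2' τ k σ x).sub_const _

lemma hexp' (τ k σ : ℝ) (x : ℝ) :
    HasDerivAt (fun x' : ℝ => Real.exp (σ^2*τ + k - x')) (-Real.exp (σ^2*τ + k - x)) x := by
  have h : HasDerivAt (fun x' : ℝ => σ^2*τ + k - x') (-1) x := by
    simpa using (hasDerivAt_id x).const_sub (σ^2*τ + k)
  simpa using h.exp

lemma step1 {τ σ : ℝ} (hτ : 0 < τ) (hσ : 0 < σ) (k : ℝ) (x : ℝ) :
    HasDerivAt (fun x' => BS τ x' k σ)
      (Real.exp (σ^2*τ + k - x) * Ncdf (d1 τ x k σ)) x := by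
  have hN2 : HasDerivAt (fun x' => Ncdf (d2 τ x' k σ))
      (phi (d2 τ x k σ) * (σ * Real.sqrt τ)⁻¹) x :=
    (Ncdf_hasDerivAt _).comp x (hd2' τ k σ x)
  have hN1 : HasDerivAt (fun x' => Ncdf (d1 τ x' k σ))
      (phi (d1 τ x k σ) * (σ * Real.sqrt τ)⁻¹) x :=
    (Ncdf_hasDerivAt _).comp x (hd1' τ k σ x)
  have hmain := hN2.sub ((hexp' τ k σ x).mul hN1)
  have hBS : (fun x' => BS τ x' k σ)
      = fun x' => Ncdf (d2 τ x' k σ) - Real.exp (σ^2*τ + k - x') * Ncdf (d1 τ x' k σ) := rfl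
  rw [hBS]
  refine hmain.congr_deriv (Eq.symm ?_)
  have hk := key_eq hτ hσ x k
  linear_combination (σ * Real.sqrt τ)⁻¹ * hk

lemma step2 {τ σ : ℝ} (hτ : 0 < τ) (hσ : 0 < σ) (k : ℝ) (x : ℝ) :
    HasDerivAt (fun x' => Real.exp (σ^2*τ + k - x') * Ncdf (d1 τ x' k σ))
      (-(Real.exp (σ^2*τ + k - x) * Ncdf (d1 τ x k σ))
        + (σ * Real.sqrt τ)⁻¹ * phi (d2 τ x k σ)) x := by
  have hN1 : HasDerivAt (fun x' => Ncdf (d1 τ x' k σ))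
      (phi (d1 τ x k σ) * (σ * Real.sqrt τ)⁻¹) x :=
    (Ncdf_hasDerivAt _).comp x (hd1' τ k σ x)
  have hmain := (hexp' τ k σ x).mul hN1
  refine hmain.congr_deriv (Eq.symm ?_)
  have hk := key_eq hτ hσ x k
  linear_combination -(σ * Real.sqrt τ)⁻¹ * hk

lemma step3 {τ σ : ℝ} (hτ : 0 < τ) (hσ : 0 < σ) (k : ℝ) (x : ℝ) :
    HasDerivAt (fun x' => -(Real.exp (σ^2*τ + k - x') * Ncdf (d1 τ x' k σ))
        + (σ * Real.sqrt τ)⁻¹ * phi (d2 τ x' k σ))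
      (-(-(Real.exp (σ^2*τ + k - x) * Ncdf (d1 τ x k σ))
          + (σ * Real.sqrt τ)⁻¹ * phi (d2 τ x k σ))
        - ((σ * Real.sqrt τ)⁻¹)^2 * (d2 τ x k σ * phi (d2 τ x k σ))) x := by
  have hphi : HasDerivAt (fun x' => phi (d2 τ x' k σ))
      ((-(d2 τ x k σ) * phi (d2 τ x k σ)) * (σ * Real.sqrt τ)⁻¹) x :=
    (phi_hasDerivAt _).comp x (hd2' τ k σ x)
  have hmain := ((step2 hτ hσ k x).neg).add (hphi.const_mul ((σ * Real.sqrt τ)⁻¹))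
  refine hmain.congr_deriv (Eq.symm ?_)
  ring

lemma Hfun_eq {τ σ : ℝ} (hτ : 0 < τ) (hσ : 0 < σ) (x k : ℝ) :
    Hfun τ x k σ = Real.exp (σ^2*τ + k - x) * Ncdf (d1 τ x k σ)
      - (σ * Real.sqrt τ)⁻¹ * phi (d2 τ x k σ)
      - ((σ * Real.sqrt τ)⁻¹)^2 / 2 * (d2 τ x k σ * phi (d2 τ x k σ)) := by
  have hder1 : deriv (fun x' => BS τ x' k σ)
      = fun x' => Real.exp (σ^2*τ + k - x') * Ncdf (d1 τ x' k σ) :=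
    funext fun y => (step1 hτ hσ k y).deriv
  have hder2 : deriv (fun x' => Real.exp (σ^2*τ + k - x') * Ncdf (d1 τ x' k σ))
      = fun x' => -(Real.exp (σ^2*τ + k - x') * Ncdf (d1 τ x' k σ))
        + (σ * Real.sqrt τ)⁻¹ * phi (d2 τ x' k σ) :=
    funext fun y => (step2 hτ hσ k y).deriv
  have h2 : iteratedDeriv 2 (fun x' => BS τ x' k σ)
      = fun x' => -(Real.exp (σ^2*τ + k - x') * Ncdf (d1 τ x' k σ))
        + (σ * Real.sqrt τ)⁻¹ * phi (d2 τ x' k σ) := by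
    rw [show (2:ℕ) = 1+1 from rfl, iteratedDeriv_succ, iteratedDeriv_one, hder1, hder2]
  have h3 : iteratedDeriv 3 (fun x' => BS τ x' k σ) x
      = -(-(Real.exp (σ^2*τ + k - x) * Ncdf (d1 τ x k σ))
          + (σ * Real.sqrt τ)⁻¹ * phi (d2 τ x k σ))
        - ((σ * Real.sqrt τ)⁻¹)^2 * (d2 τ x k σ * phi (d2 τ x k σ)) := by
    rw [show (3:ℕ) = 2+1 from rfl, iteratedDeriv_succ, h2]
    exact (step3 hτ hσ k x).deriv
  unfold Hfun
  rw [h3, h2]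
  ring

/-- pointwise bound on `H`. -/
theorem stmt_15 (c₁ c₂ : ℝ) (hc₁ : 0 < c₁) (hc : c₁ ≤ c₂) :
    ∃ C > 0, ∀ τ ∈ Set.Ioc (0 : ℝ) 1, ∀ x k : ℝ, ∀ σ ∈ Set.Icc c₁ c₂,
      |Hfun τ x k σ| ≤ C * τ⁻¹ * (1 + Real.exp (k - x)) := by
  refine ⟨Real.exp (c₂^2) + 1/c₁ + 1/(2*c₁^2), by positivity, ?_⟩
  rintro τ ⟨hτ0, hτ1⟩ x k σ ⟨hσ1, hσ2⟩
  have hσ0 : 0 < σ := lt_of_lt_of_le hc₁ hσ1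
  have hst : (0:ℝ) < σ * Real.sqrt τ := mul_pos hσ0 (Real.sqrt_pos.2 hτ0)
  set a := (σ * Real.sqrt τ)⁻¹ with ha
  have ha0 : 0 < a := inv_pos.2 hst
  set E := Real.exp (k - x) with hE
  have hE0 : 0 < E := Real.exp_pos _
  have hτi : 1 ≤ τ⁻¹ := (one_le_inv₀ hτ0).2 hτ1
  have hsqτ : τ ≤ Real.sqrt τ := by
    nlinarith [Real.sq_sqrt hτ0.le, Real.sqrt_le_one.mpr hτ1, Real.sqrt_nonneg τ]
  have ha_le : a ≤ 1/c₁ * τ⁻¹ := by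
    rw [ha]
    have h1 : c₁ * τ ≤ σ * Real.sqrt τ := by nlinarith
    calc (σ * Real.sqrt τ)⁻¹ ≤ (c₁ * τ)⁻¹ := by
          exact inv_anti₀ (by positivity) h1
      _ = 1/c₁ * τ⁻¹ := by rw [mul_inv]; ring
  have ha2 : a^2 ≤ 1/c₁^2 * τ⁻¹ := by
    have hsq : (σ * Real.sqrt τ)^2 = σ^2 * τ := by rw [mul_pow, Real.sq_sqrt hτ0.le]
    rw [ha, inv_pow, hsq]
    calc (σ^2 * τ)⁻¹ ≤ (c₁^2 * τ)⁻¹ := by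
          exact inv_anti₀ (by positivity) (by nlinarith [mul_nonneg (mul_nonneg (sub_nonneg.2 hσ1) (by linarith : (0:ℝ) ≤ σ + c₁)) hτ0.le])
      _ = 1/c₁^2 * τ⁻¹ := by rw [mul_inv]; ring
  rw [Hfun_eq hτ0 hσ0 x k]
  have hT1 : Real.exp (σ^2*τ + k - x) * Ncdf (d1 τ x k σ) ≤ Real.exp (c₂^2) * E := by
    calc Real.exp (σ^2*τ + k - x) * Ncdf (d1 τ x k σ)
        ≤ Real.exp (σ^2*τ + k - x) * 1 :=
          mul_le_mul_of_nonneg_left (Ncdf_le_one _) (Real.exp_pos _).le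
      _ = Real.exp (σ^2*τ) * E := by
          rw [mul_one, hE, ← Real.exp_add]; ring_nf
      _ ≤ Real.exp (c₂^2) * E :=
          mul_le_mul_of_nonneg_right (Real.exp_le_exp.2 (by nlinarith)) hE0.le
  have hT1' : 0 ≤ Real.exp (σ^2*τ + k - x) * Ncdf (d1 τ x k σ) :=
    mul_nonneg (Real.exp_pos _).le (Ncdf_nonneg _)
  have hT2 : a * phi (d2 τ x k σ) ≤ 1/c₁ * τ⁻¹ := by
    calc a * phi (d2 τ x k σ) ≤ a * 1 := mul_le_mul_of_nonneg_left (phi_le_one _) ha0.le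
      _ = a := mul_one a
      _ ≤ 1/c₁ * τ⁻¹ := ha_le
  have hT2' : 0 ≤ a * phi (d2 τ x k σ) := mul_nonneg ha0.le (phi_nonneg _)
  have hT3 : |a^2/2 * (d2 τ x k σ * phi (d2 τ x k σ))| ≤ 1/(2*c₁^2) * τ⁻¹ := by
    rw [abs_mul, abs_mul]
    have h1 : |d2 τ x k σ| * |phi (d2 τ x k σ)| ≤ 1 := by
      rw [abs_of_nonneg (phi_nonneg _)]; exact abs_mul_phi_le_one _
    have h2 : |a^2/2| = a^2/2 := abs_of_nonneg (by positivity)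
    calc |a^2/2| * (|d2 τ x k σ| * |phi (d2 τ x k σ)|) ≤ |a^2/2| * 1 :=
          mul_le_mul_of_nonneg_left h1 (abs_nonneg _)
      _ = a^2/2 := by rw [h2, mul_one]
      _ ≤ 1/(2*c₁^2) * τ⁻¹ := by
          have he : 1/(2*c₁^2) * τ⁻¹ = (1/c₁^2 * τ⁻¹)/2 := by
            field_simp
          rw [he]; linarith
  have habs : |Real.exp (σ^2*τ + k - x) * Ncdf (d1 τ x k σ) - a * phi (d2 τ x k σ)
      - a^2/2 * (d2 τ x k σ * phi (d2 τ x k σ))|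
      ≤ Real.exp (c₂^2) * E + 1/c₁ * τ⁻¹ + 1/(2*c₁^2) * τ⁻¹ := by
    have hT3' := abs_le.1 hT3
    rw [abs_le]
    constructor <;> linarith
  have hkey : (1:ℝ) + E ≤ τ⁻¹ * (1 + E) := le_mul_of_one_le_left (by positivity) hτi
  have hexpc : (0:ℝ) < Real.exp (c₂^2) := Real.exp_pos _
  calc |Real.exp (σ^2*τ + k - x) * Ncdf (d1 τ x k σ) - a * phi (d2 τ x k σ)
      - a^2/2 * (d2 τ x k σ * phi (d2 τ x k σ))|
      ≤ Real.exp (c₂^2) * E + 1/c₁ * τ⁻¹ + 1/(2*c₁^2) * τ⁻¹ := habs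
    _ ≤ (Real.exp (c₂^2) + 1/c₁ + 1/(2*c₁^2)) * τ⁻¹ * (1 + E) := by
        have h5 : Real.exp (c₂^2) * E ≤ Real.exp (c₂^2) * (τ⁻¹ * (1 + E)) := by
          apply mul_le_mul_of_nonneg_left _ hexpc.le
          linarith
        have h6 : 1/c₁ * τ⁻¹ ≤ 1/c₁ * (τ⁻¹ * (1 + E)) := by
          apply mul_le_mul_of_nonneg_left _ (by positivity)
          nlinarith [mul_nonneg (inv_pos.2 hτ0).le hE0.le]
        have h7 : 1/(2*c₁^2) * τ⁻¹ ≤ 1/(2*c₁^2) * (τ⁻¹ * (1 + E)) := by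
          apply mul_le_mul_of_nonneg_left _ (by positivity)
          nlinarith [mul_nonneg (inv_pos.2 hτ0).le hE0.le]
        linarith
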